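/- Barrier comparison in the Liouville theorem: Let α > 0, ε > 0 small, and V(x) = ((1+ε)/2)|x'|² + ((1+ε)^{1−n}/((2+α)(1+α))) x_n^{2+α} − ε x_n on ℝ^n_+. Then det D²V = x_n^α, and V ≥ U_0 on {x_n = 0}, and on {|x'| = C_1, 0 ≤ x_n ≤ 1} for suitable C_1(n,α), where U_0(x) = (1/2)|x'|² + x_n^{2+α}/((1+α)(2+α)); moreover V ≥ U_0 − C_2 ε on {|x'| ≤ C_1, x_n = 1} for some C_2(n,α). -/

import Mathlib

/-!
`V` is a sum of functions of one coordinate each, so its Hessian is the diagonal matrix with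
entries `1 + ε` and `(1 + ε) ^ (1 - n) xₙ ^ α`, whose product is `xₙ ^ α`. For the comparisons,
`V - U₀ = (ε/2)|x'|² - (1 - (1 + ε) ^ (1 - n)) xₙ^(2+α)/((1+α)(2+α)) - ε xₙ`, and Bernoulli's
inequality `(1 + ε) ^ (1 - n) ≥ 1 - (n - 1) ε` bounds the middle term by `(n - 1) ε xₙ^(2+α) / 2`,
which `(ε/2)|x'|²` absorbs as soon as `|x'|² = n + 1` and `xₙ ≤ 1`.
-/

noncomputable def pderiv' {n : ℕ} (i : Fin n) (u : (Fin n → ℝ) → ℝ) (x : Fin n → ℝ) : ℝ :=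
  fderiv ℝ u x (Pi.single i 1)

noncomputable def hess {n : ℕ} (u : (Fin n → ℝ) → ℝ) (x : Fin n → ℝ) :
    Matrix (Fin n) (Fin n) ℝ :=
  Matrix.of fun i j => pderiv' j (pderiv' i u) x

open Filter Topology ContinuousLinearMap

lemma pderiv'_apply_comp {n : ℕ} {f : ℝ → ℝ} {f' : ℝ} {i : Fin n} {x : Fin n → ℝ}
    (hf : HasDerivAt f f' (x i)) (j : Fin n) :
    pderiv' j (fun y => f (y i)) x = if i = j then f' else 0 := by
  have : HasFDerivAt (fun y : Fin n → ℝ => f (y i)) (f' • proj i) x :=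
    hf.comp_hasFDerivAt x (proj i : (Fin n → ℝ) →L[ℝ] ℝ).hasFDerivAt
  rw [pderiv', this.fderiv]
  simp [Pi.single_apply]

lemma pderiv'_sum_apply {n : ℕ} {g : Fin n → ℝ → ℝ} {g' : Fin n → ℝ} {x : Fin n → ℝ}
    (hg : ∀ i, HasDerivAt (g i) (g' i) (x i)) (j : Fin n) :
    pderiv' j (fun y => ∑ i, g i (y i)) x = g' j := by
  have : HasFDerivAt (fun y : Fin n → ℝ => ∑ i, g i (y i)) (∑ i, g' i • proj i) x :=
    HasFDerivAt.fun_sum fun i _ =>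
      (hg i).comp_hasFDerivAt x (proj i : (Fin n → ℝ) →L[ℝ] ℝ).hasFDerivAt
  rw [pderiv', this.fderiv]
  simp [Pi.single_apply]

lemma hess_sum_apply {n : ℕ} {g g' : Fin n → ℝ → ℝ} {g'' : Fin n → ℝ} {x : Fin n → ℝ}
    (hg : ∀ i, ∀ᶠ t in 𝓝 (x i), HasDerivAt (g i) (g' i t) t)
    (hg' : ∀ i, HasDerivAt (g' i) (g'' i) (x i)) :
    hess (fun y => ∑ i, g i (y i)) x = Matrix.diagonal g'' := by
  have hnear : ∀ᶠ y in 𝓝 x, ∀ i, HasDerivAt (g i) (g' i (y i)) (y i) :=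
    eventually_all.2 fun i => (continuous_apply i).continuousAt.eventually (hg i)
  ext i j
  have hpd : pderiv' i (fun y => ∑ k, g k (y k)) =ᶠ[𝓝 x] fun y => g' i (y i) :=
    hnear.mono fun y hy => pderiv'_sum_apply hy i
  rw [hess, Matrix.of_apply, pderiv', hpd.fderiv_eq, ← pderiv', pderiv'_apply_comp (hg' i),
    Matrix.diagonal_apply]

lemma one_sub_mul_le_one_add_rpow_neg {s k : ℝ} (hs : -1 < s) (hk : 0 ≤ k) :
    1 - k * s ≤ (1 + s) ^ (-k) := by
  have hpos : 0 < 1 + s := by linarith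
  rw [Real.rpow_def_of_pos hpos]
  have hlog : Real.log (1 + s) ≤ s := by linarith [Real.log_le_sub_one_of_pos hpos]
  nlinarith [Real.add_one_le_exp (Real.log (1 + s) * -k)]

section Barrier

variable {n : ℕ} (m : Fin n) (a b e p : ℝ)

lemma barrier_eq_sum_apply :
    (fun y : Fin n → ℝ => a * ∑ i ∈ Finset.univ.erase m, y i ^ 2 + b * y m ^ p - e * y m) =
      fun y => ∑ i, (if i = m then b * y i ^ p - e * y i else a * y i ^ 2) := by
  funext y
  rw [← Finset.add_sum_erase _ _ (Finset.mem_univ m), if_pos rfl, Finset.mul_sum,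
    Finset.sum_congr rfl fun i hi => if_neg (Finset.ne_of_mem_erase hi)]
  ring

lemma hess_barrier {x : Fin n → ℝ} (hx : 0 < x m) :
    hess (fun y => a * ∑ i ∈ Finset.univ.erase m, y i ^ 2 + b * y m ^ p - e * y m) x =
      Matrix.diagonal fun i => if i = m then b * p * (p - 1) * x m ^ (p - 2) else 2 * a := by
  rw [barrier_eq_sum_apply]
  refine hess_sum_apply (g := fun i t => if i = m then b * t ^ p - e * t else a * t ^ 2)
    (g' := fun i t => if i = m then b * p * t ^ (p - 1) - e else 2 * a * t)
    (fun i => ?_) (fun i => ?_)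
  · split_ifs with hi
    · subst hi
      filter_upwards [lt_mem_nhds hx] with t ht
      exact (((Real.hasDerivAt_rpow_const (Or.inl ht.ne')).const_mul b).fun_sub
        ((hasDerivAt_id t).const_mul e)).congr_deriv (by ring)
    · exact Eventually.of_forall fun t =>
        ((hasDerivAt_pow 2 t).const_mul a).congr_deriv (by ring)
  · split_ifs with hi
    · subst hi
      exact (((Real.hasDerivAt_rpow_const (Or.inl hx.ne')).const_mul (b * p)).sub_const
        e).congr_deriv (by ring_nf)
    · simpa using (hasDerivAt_id (x i)).const_mul (2 * a)

lemma det_hess_barrier {x : Fin n → ℝ} (hx : 0 < x m) :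
    (hess (fun y => a * ∑ i ∈ Finset.univ.erase m, y i ^ 2 + b * y m ^ p - e * y m) x).det =
      (2 * a) ^ (n - 1) * (b * p * (p - 1) * x m ^ (p - 2)) := by
  rw [hess_barrier m a b e p hx, Matrix.det_diagonal,
    ← Finset.mul_prod_erase _ _ (Finset.mem_univ m), if_pos rfl,
    Finset.prod_congr rfl fun i hi => if_neg (Finset.ne_of_mem_erase hi),
    Finset.prod_const, Finset.card_erase_of_mem (Finset.mem_univ m), Finset.card_univ,
    Fintype.card_fin, mul_comm]

end Barrier

lemma det_hess_barrier_eq_rpow {n : ℕ} (m : Fin n) (hn : 1 ≤ n) {α ε : ℝ} (hα : 0 < α)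
    (hε : 0 < ε) (e : ℝ) {x : Fin n → ℝ} (hx : 0 < x m) :
    (hess (fun y => (1 + ε) / 2 * ∑ i ∈ Finset.univ.erase m, y i ^ 2 +
      (1 + ε) ^ ((1 : ℝ) - n) / ((2 + α) * (1 + α)) * y m ^ ((2 : ℝ) + α) - e * y m) x).det =
      x m ^ α := by
  have hpow : (1 + ε) ^ (n - 1) * (1 + ε) ^ ((1 : ℝ) - n) = 1 := by
    rw [← Real.rpow_natCast, ← Real.rpow_add (by linarith), Nat.cast_sub hn]
    norm_num
  rw [det_hess_barrier m _ _ _ _ hx, mul_div_cancel₀ _ two_ne_zero,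
    show (2 : ℝ) + α - 1 = 1 + α by ring, show (2 : ℝ) + α - 2 = α by ring]
  field_simp
  exact hpow

lemma barrier_comparison {α ε k c S T t : ℝ} (hα : 0 < α) (hε : 0 ≤ ε) (hk : 0 ≤ k)
    (hc : 1 - k * ε ≤ c) (hT : 0 ≤ T) :
    1 / 2 * S + T / ((1 + α) * (2 + α)) + ε * (S - k * T) / 2 - ε * t ≤
      (1 + ε) / 2 * S + c / ((2 + α) * (1 + α)) * T - ε * t := by
  have hD : 2 ≤ (1 + α) * (2 + α) := by nlinarith
  have hloss : (1 - c) * T / ((1 + α) * (2 + α)) ≤ k * ε * T / 2 :=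
    div_le_div₀ (by positivity) (mul_le_mul_of_nonneg_right (by linarith) hT) two_pos hD
  have hsplit : c / ((2 + α) * (1 + α)) * T =
      T / ((1 + α) * (2 + α)) - (1 - c) * T / ((1 + α) * (2 + α)) := by
    field_simp; ring
  rw [hsplit]
  linarith

/-- barrier comparison in the Liouville theorem.  With
`V(x) = ((1+ε)/2)|x'|² + ((1+ε)^{1-n}/((2+α)(1+α))) xₙ^{2+α} − ε xₙ` and
`U₀(x) = ½|x'|² + xₙ^{2+α}/((1+α)(2+α))`, one has `det D²V = xₙ^α`, `V ≥ U₀` on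
`{xₙ = 0}` and on `{|x'| = C₁, 0 ≤ xₙ ≤ 1}`, and `V ≥ U₀ − C₂ ε` on
`{|x'| ≤ C₁, xₙ = 1}`, with `C₁, C₂` depending only on `n, α`. -/
theorem stmt16 (n : ℕ) (hn : 2 ≤ n) (α : ℝ) (hα : 0 < α) :
    ∃ C₁ C₂ : ℝ, 0 < C₁ ∧ 0 < C₂ ∧
      ∀ ε : ℝ, 0 < ε → ε ≤ 1 →
      ∀ V U₀ : (Fin n → ℝ) → ℝ,
        V = (fun x => ((1 + ε) / 2) * ∑ i ∈ Finset.univ.erase ⟨n - 1, by omega⟩, (x i) ^ 2 +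
          ((1 + ε) ^ ((1 : ℝ) - n) / ((2 + α) * (1 + α))) *
            (x ⟨n - 1, by omega⟩) ^ ((2 : ℝ) + α) -
          ε * x ⟨n - 1, by omega⟩) →
        U₀ = (fun x => (1 / 2) * ∑ i ∈ Finset.univ.erase ⟨n - 1, by omega⟩, (x i) ^ 2 +
          (x ⟨n - 1, by omega⟩) ^ ((2 : ℝ) + α) / ((1 + α) * (2 + α))) →
        (∀ x : Fin n → ℝ, 0 < x ⟨n - 1, by omega⟩ →
          (hess V x).det = (x ⟨n - 1, by omega⟩) ^ α) ∧
        (∀ x : Fin n → ℝ, x ⟨n - 1, by omega⟩ = 0 → U₀ x ≤ V x) ∧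
        (∀ x : Fin n → ℝ, 0 ≤ x ⟨n - 1, by omega⟩ → x ⟨n - 1, by omega⟩ ≤ 1 →
          (∑ i ∈ Finset.univ.erase ⟨n - 1, by omega⟩, (x i) ^ 2) = C₁ ^ 2 → U₀ x ≤ V x) ∧
        (∀ x : Fin n → ℝ, x ⟨n - 1, by omega⟩ = 1 →
          (∑ i ∈ Finset.univ.erase ⟨n - 1, by omega⟩, (x i) ^ 2) ≤ C₁ ^ 2 →
          U₀ x - C₂ * ε ≤ V x) := by
  set m : Fin n := ⟨n - 1, by omega⟩
  have hk : (0 : ℝ) ≤ n - 1 := by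
    have : (2 : ℝ) ≤ n := by exact_mod_cast hn
    linarith
  refine ⟨√(n + 1), (n + 1) / 2, by positivity, by positivity,
    fun ε hε _ V U₀ hV hU₀ => ?_⟩
  have hc : 1 - (n - 1) * ε ≤ (1 + ε) ^ ((1 : ℝ) - n) := by
    rw [show (1 : ℝ) - n = -(n - 1) by ring]
    exact one_sub_mul_le_one_add_rpow_neg (by linarith) hk
  have key : ∀ x : Fin n → ℝ, 0 ≤ x m →
      U₀ x + ε * (∑ i ∈ Finset.univ.erase m, x i ^ 2 - (n - 1) * x m ^ ((2 : ℝ) + α)) / 2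
        - ε * x m ≤ V x := fun x hx => by
    subst hV hU₀
    exact barrier_comparison hα hε.le hk hc (Real.rpow_nonneg hx _)
  have hS : ∀ x : Fin n → ℝ, 0 ≤ ∑ i ∈ Finset.univ.erase m, x i ^ 2 := fun x =>
    Finset.sum_nonneg fun i _ => sq_nonneg (x i)
  have hC₁ : √((n : ℝ) + 1) ^ 2 = n + 1 := Real.sq_sqrt (by positivity)
  refine ⟨fun x hx => ?_, fun x hx => ?_, fun x h0 h1 hSx => ?_, fun x h1 hSx => ?_⟩
  · subst hV
    exact det_hess_barrier_eq_rpow m (by omega) hα hε ε hx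
  · have := key x hx.ge
    rw [hx, Real.zero_rpow (by positivity)] at this
    linarith [mul_nonneg hε.le (hS x)]
  · have := key x h0
    have hT : x m ^ ((2 : ℝ) + α) ≤ 1 := Real.rpow_le_one h0 h1 (by positivity)
    rw [hSx, hC₁] at this
    linarith [mul_le_mul_of_nonneg_left hT (mul_nonneg hk hε.le),
      mul_le_mul_of_nonneg_left h1 hε.le]
  · have := key x (by rw [h1]; norm_num)
    rw [h1, Real.one_rpow] at this
    linarith [mul_nonneg hε.le (hS x)]
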